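/- Let C be cyclic of order 2^n, n ≥ 3, and S_⊛(C) = { x ∈ V(F_2 C) : x = x^⊛ } the group of ⊛-symmetric normalized units. Then |S_⊛(C)| = 2^{2^{n-1}} and |S_⊛(C)[2]| = 2^{2^{n-2}+1}. -/

import Mathlib

open MonoidAlgebra Finset

noncomputable section

/-- The cyclic group of order `2^n`, written multiplicatively. -/
abbrev Cgrp (n : ℕ) : Type := Multiplicative (ZMod (2 ^ n))

/-- The group algebra `F₂C` of the cyclic group of order `2^n` over the field of two elements. -/
abbrev FC (n : ℕ) : Type := MonoidAlgebra (ZMod 2) (Cgrp n)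

/-- The augmentation map `χ : F₂C → F₂`. -/
def aug (n : ℕ) : FC n →ₐ[ZMod 2] ZMod 2 :=
  MonoidAlgebra.lift (ZMod 2) (ZMod 2) (Cgrp n) 1

/-- The generator `a` of the cyclic group `C`. -/
def agen (n : ℕ) : Cgrp n := Multiplicative.ofAdd (1 : ZMod (2 ^ n))

/-- The generator `a` viewed inside the group algebra `F₂C`. -/
def A (n : ℕ) : FC n := MonoidAlgebra.of (ZMod 2) (Cgrp n) (agen n)

/-- Group elements of `C` as elements of the group algebra. -/
def Gel (n : ℕ) (i : ZMod (2 ^ n)) : FC n :=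
  MonoidAlgebra.of (ZMod 2) (Cgrp n) (Multiplicative.ofAdd i)

/-- The involution `*` of `F₂C` induced by `a ↦ a⁻¹`. -/
def starOne (n : ℕ) : FC n ≃ₐ[ZMod 2] FC n :=
  MonoidAlgebra.domCongr (ZMod 2) (ZMod 2) (MulEquiv.inv (Cgrp n))

/-- The scalar `2^(n-1) - 1` in `ZMod (2^n)`. -/
def cf (n : ℕ) : ZMod (2 ^ n) := 2 ^ (n - 1) - 1

lemma two_pow_zmod (n : ℕ) : ((2 : ZMod (2 ^ n))) ^ n = 0 := by
  have h : ((2 ^ n : ℕ) : ZMod (2 ^ n)) = 0 := ZMod.natCast_self _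
  push_cast at h
  exact h

lemma cf_sq (n : ℕ) (hn : 2 ≤ n) : cf n * cf n = 1 := by
  have h0 := two_pow_zmod n
  have e1 : (2 : ZMod (2 ^ n)) ^ (n - 1) * 2 ^ (n - 1) = 0 := by
    rw [← pow_add]
    have h : n - 1 + (n - 1) = n + (n - 2) := by omega
    rw [h, pow_add, h0, zero_mul]
  have e2 : (2 : ZMod (2 ^ n)) * 2 ^ (n - 1) = 0 := by
    have h : (2 : ZMod (2 ^ n)) * 2 ^ (n - 1) = 2 ^ (n - 1 + 1) := (pow_succ' 2 (n-1)).symm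
    rw [h]
    have h' : n - 1 + 1 = n := by omega
    rw [h', h0]
  have key : cf n * cf n = 2 ^ (n - 1) * 2 ^ (n - 1) - 2 * 2 ^ (n - 1) + 1 := by
    unfold cf; ring
  rw [key, e1, e2]; ring

/-- The automorphism `z ↦ (2^(n-1)-1)·z` of `ZMod (2^n)`. -/
def thetaAdd (n : ℕ) (hn : 2 ≤ n) : ZMod (2 ^ n) ≃+ ZMod (2 ^ n) where
  toFun z := cf n * z
  invFun z := cf n * z
  left_inv z := by show cf n * (cf n * z) = z; rw [← mul_assoc, cf_sq n hn, one_mul]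
  right_inv z := by show cf n * (cf n * z) = z; rw [← mul_assoc, cf_sq n hn, one_mul]
  map_add' x y := mul_add _ _ _

/-- The automorphism `a ↦ a^(2^(n-1)-1)` of `C`. -/
def theta (n : ℕ) (hn : 2 ≤ n) : Cgrp n ≃* Cgrp n :=
  AddEquiv.toMultiplicative (thetaAdd n hn)

/-- The involution `⊛` of `F₂C` induced by `a ↦ a^(2^(n-1)-1)`. -/
def starTwo (n : ℕ) (hn : 2 ≤ n) : FC n ≃ₐ[ZMod 2] FC n :=
  MonoidAlgebra.domCongr (ZMod 2) (ZMod 2) (theta n hn)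

/-- The group `V(F₂C)` of normalized units, as a subgroup of the unit group of `F₂C`. -/
def Vgrp (n : ℕ) : Subgroup (FC n)ˣ where
  carrier := {u | aug n (↑u : FC n) = 1}
  one_mem' := by simp [Set.mem_setOf_eq]
  mul_mem' := by
    intro u v hu hv
    simp only [Set.mem_setOf_eq, Units.val_mul, map_mul] at *
    rw [hu, hv, one_mul]
  inv_mem' := by
    intro u hu
    simp only [Set.mem_setOf_eq] at *
    have h : aug n ((↑u : FC n) * (↑u⁻¹ : FC n)) = 1 := by
      rw [Units.mul_inv, map_one]
    rw [map_mul, hu, one_mul] at h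
    exact h

/-- The sum `Ĉ` of all elements of `C` inside the group algebra. -/
def hatC (n : ℕ) : FC n := ∑ g : Cgrp n, MonoidAlgebra.of (ZMod 2) (Cgrp n) g

/-- The sum `Ĉ²` of all elements of the subgroup `C²` of squares. -/
def hatCsq (n : ℕ) : FC n :=
  ∑ g ∈ Finset.image (fun h : Cgrp n => h * h) Finset.univ,
    MonoidAlgebra.of (ZMod 2) (Cgrp n) g

/-- The subspace `F₂C²` of `F₂C` spanned by the subgroup of squares. -/
def sqSpan (n : ℕ) : Submodule (ZMod 2) (FC n) :=
  Submodule.span (ZMod 2) (Set.range fun g : Cgrp n => MonoidAlgebra.of (ZMod 2) (Cgrp n) (g * g))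

lemma hatC_mul_hatC (n : ℕ) (hn : 1 ≤ n) : hatC n * hatC n = 0 := by
  classical
  unfold hatC
  rw [Finset.sum_mul_sum]
  have h1 : ∀ g : Cgrp n,
      ∑ h : Cgrp n, MonoidAlgebra.of (ZMod 2) (Cgrp n) g * MonoidAlgebra.of (ZMod 2) (Cgrp n) h
        = hatC n := by
    intro g
    have h2 : ∀ h : Cgrp n,
        MonoidAlgebra.of (ZMod 2) (Cgrp n) g * MonoidAlgebra.of (ZMod 2) (Cgrp n) h
          = MonoidAlgebra.of (ZMod 2) (Cgrp n) (g * h) := by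
      intro h; rw [map_mul]
    unfold hatC
    calc ∑ h : Cgrp n, MonoidAlgebra.of (ZMod 2) (Cgrp n) g * MonoidAlgebra.of (ZMod 2) (Cgrp n) h
        = ∑ h : Cgrp n, MonoidAlgebra.of (ZMod 2) (Cgrp n) (g * h) := by
          exact Finset.sum_congr rfl fun h _ => h2 h
      _ = ∑ h : Cgrp n, MonoidAlgebra.of (ZMod 2) (Cgrp n) h :=
          Fintype.sum_equiv (Equiv.mulLeft g) _ _ (fun h => rfl)
  calc (∑ g : Cgrp n, ∑ h : Cgrp n,
        MonoidAlgebra.of (ZMod 2) (Cgrp n) g * MonoidAlgebra.of (ZMod 2) (Cgrp n) h)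
      = ∑ _g : Cgrp n, hatC n := Finset.sum_congr rfl fun g _ => h1 g
    _ = (Fintype.card (Cgrp n)) • hatC n := by rw [Finset.sum_const, Finset.card_univ]
    _ = 0 := by
        rw [← Nat.cast_smul_eq_nsmul (ZMod 2)]
        have hc : ((Fintype.card (Cgrp n) : ℕ) : ZMod 2) = 0 := by
          have : Fintype.card (Cgrp n) = 2 ^ n := by simp [Cgrp, ZMod.card]
          rw [this]
          push_cast
          rw [show ((2:ZMod 2) = 0) from rfl, zero_pow (by omega)]
        rw [hc, zero_smul]

lemma add_self_FC (n : ℕ) (x : FC n) : x + x = 0 := by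
  rw [← two_smul (ZMod 2) x, show ((2:ZMod 2) = 0) from rfl, zero_smul]

/-- `1 + Ĉ` as a unit of `F₂C` (it is its own inverse). -/
def uC (n : ℕ) (hn : 1 ≤ n) : (FC n)ˣ :=
  ⟨1 + hatC n, 1 + hatC n, by
    have h : (1 + hatC n) * (1 + hatC n) = 1 + (hatC n + hatC n) + hatC n * hatC n := by ring
    rw [h, add_self_FC, hatC_mul_hatC n hn, add_zero, add_zero], by
    have h : (1 + hatC n) * (1 + hatC n) = 1 + (hatC n + hatC n) + hatC n * hatC n := by ring
    rw [h, add_self_FC, hatC_mul_hatC n hn, add_zero, add_zero]⟩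

/-! Identify `F₂C` with functions `ZMod (2 ^ n) → F₂` through coefficients. `⊛`-symmetry is
invariance under the involution `i ↦ (2 ^ (n - 1) - 1) * i`, whose fixed points are the two
solutions of `2 * i = 0`; it has `2 ^ (n - 1) + 1` orbits, so there are `2 ^ (2 ^ (n - 1) + 1)`
symmetric elements. An element of augmentation `1` is a unit because `x ^ (2 ^ n) = χ(x)`, and
`x ↦ x + 1` swaps augmentations `0` and `1`, so half of the symmetric elements lie in `S_⊛(C)`.

For `S_⊛(C)[2]`, `x ↦ x + 1` turns `x² = 1` into `y² = 0`. Since `y² = ∑ y_g g²` in characteristic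
`2` and squaring is two-to-one with kernel `{1, a ^ (2 ^ (n - 1))}`, this says that the
coefficients are invariant under `i ↦ i + 2 ^ (n - 1)`. Such functions descend to
`ZMod (2 ^ (n - 1))`, where `⊛` becomes `i ↦ -i`, again an involution with two fixed points, now
with `2 ^ (n - 2) + 1` orbits. -/

open Function

theorem Function.Involutive.card_invariant_fun {X F : Type*} [Finite X] [Finite F] {σ : X → X}
    (hσ : Involutive σ) :
    Nat.card {c : X → F // ∀ x, c (σ x) = c x} =
      Nat.card F ^ ((Nat.card X + Nat.card (fixedPoints σ)) / 2) := by
  classical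
  cases nonempty_fintype X
  -- for any linear order, each orbit `{x, σ x}` has exactly one element with `x ≤ σ x`
  let _ : LinearOrder X := linearOrderOfSTO WellOrderingRel
  have hmin : ∀ x, min x (σ x) ≤ σ (min x (σ x)) := fun x => by
    rcases le_total x (σ x) with h | h
    · rw [min_eq_left h]; exact h
    · rw [min_eq_right h, hσ]; exact h
  let restrict : {c : X → F // ∀ x, c (σ x) = c x} ≃ ({x // x ≤ σ x} → F) :=
    { toFun c r := c.1 r
      invFun d := ⟨fun x => d ⟨min x (σ x), hmin x⟩, fun x => by
        simp only [hσ x, min_comm]⟩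
      left_inv c := Subtype.ext <| funext fun x => by
        rcases min_choice x (σ x) with h | h <;> simp only [h, c.2]
      right_inv d := funext fun r => by simp only [min_eq_left r.2] }
  have hrep : 2 * Nat.card {x // x ≤ σ x} = Nat.card X + Nat.card (fixedPoints σ) := by
    have hswap : #{x | σ x ≤ x} = #{x | x ≤ σ x} :=
      Finset.card_nbij' σ σ (fun x hx => by simpa [hσ x] using hx)
        (fun x hx => by simpa [hσ x] using hx) (fun x _ => hσ x) (fun x _ => hσ x)
    have hunion := Finset.card_union_add_card_inter (univ.filter fun x => x ≤ σ x)
      (univ.filter fun x => σ x ≤ x)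
    rw [← Finset.filter_or, ← Finset.filter_and] at hunion
    simp only [le_total, Finset.filter_true, ← le_antisymm_iff] at hunion
    simp only [Nat.card_eq_fintype_card, Fintype.card_subtype, mem_fixedPoints, IsFixedPt,
      Finset.card_univ, eq_comm (a := σ _)] at hunion ⊢
    omega
  rw [Nat.card_congr restrict, Nat.card_fun, ← hrep, Nat.mul_div_cancel_left _ two_pos]

theorem Function.Surjective.card_subtype_factorsThrough {X Y F : Type*} {π : X → Y}
    (hπ : Surjective π) (p : (X → F) → Prop) :
    Nat.card {c : X → F // p c ∧ c.FactorsThrough π} = Nat.card {d : Y → F // p (d ∘ π)} := by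
  refine (Nat.card_congr (Equiv.ofBijective
    (fun d => ⟨d.1 ∘ π, d.2, fun _ _ h => congrArg d.1 h⟩) ⟨fun d d' h => ?_, fun c => ?_⟩)).symm
  · exact Subtype.ext (hπ.injective_comp_right (congrArg Subtype.val h))
  · have hc : c.1 ∘ surjInv hπ ∘ π = c.1 := funext fun x => c.2.2 (surjInv_eq hπ (π x))
    exact ⟨⟨c.1 ∘ surjInv hπ, by rw [comp_assoc, hc]; exact c.2.1⟩, Subtype.ext hc⟩

theorem Subgroup.card_subtype_eq_of_isUnit {M : Type*} [Monoid M] (S : Subgroup Mˣ)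
    {p q : M → Prop} (hS : ∀ u : Mˣ, u ∈ S ↔ p u) (hp : ∀ x, p x → IsUnit x) :
    Nat.card {u : S // q (u : Mˣ)} = Nat.card {x : M // p x ∧ q x} := by
  refine Nat.card_congr (Equiv.ofBijective (fun u => ⟨u.1.1.1, (hS _).1 u.1.2, u.2⟩)
    ⟨fun u v h => ?_, fun x => ?_⟩)
  · exact Subtype.ext (Subtype.ext (Units.ext (congrArg Subtype.val h)))
  · exact ⟨⟨⟨(hp _ x.2.1).unit, (hS _).2 x.2.1⟩, x.2.2⟩, rfl⟩

theorem Nat.card_subtype_eq_two_mul_of_toggle {α : Type*} [Finite α] {p : α → Prop}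
    {f : α → ZMod 2} (e : α ≃ α) (hp : ∀ x, p (e x) ↔ p x) (hf : ∀ x, f (e x) = f x + 1) :
    Nat.card {x // p x} = 2 * Nat.card {x // p x ∧ f x = 1} := by
  have hZMod2 : ∀ a : ZMod 2, ¬a = 1 ↔ a + 1 = 1 := by decide
  have htoggle : ∀ x, (p x ∧ ¬f x = 1) ↔ (p (e x) ∧ f (e x) = 1) := fun x => by
    rw [hp, hf, hZMod2]
  have hsplit := Nat.card_congr ((Equiv.sumCompl fun x : {x // p x} => f x = 1).symm.trans
    ((Equiv.subtypeSubtypeEquivSubtypeInter p (f · = 1)).sumCongr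
      ((Equiv.subtypeSubtypeEquivSubtypeInter p (¬f · = 1)).trans
        (e.subtypeEquiv (q := fun x => p x ∧ f x = 1) htoggle))))
  rw [hsplit, Nat.card_sum, two_mul]

namespace MonoidAlgebra

theorem eq_domCongr_iff {k M : Type*} [CommSemiring k] [Monoid M] (e : M ≃* M)
    (x : MonoidAlgebra k M) : x = domCongr k k e x ↔ ∀ g, x.coeff (e g) = x.coeff g := by
  rw [MonoidAlgebra.ext_iff, Finsupp.ext_iff]
  refine ⟨fun h g => ?_, fun h g => ?_⟩
  · rw [h, coeff_domCongr, e.symm_apply_apply]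
  · rw [coeff_domCongr, ← h (e.symm g), e.apply_symm_apply]

variable {G : Type*} [Fintype G]

theorem eq_sum_single {R : Type*} [Semiring R] (x : MonoidAlgebra R G) :
    x = ∑ g, single g (x.coeff g) := by
  conv_lhs => rw [← sum_coeff_single x]
  exact Finset.sum_subset (Finset.subset_univ _) fun g _ hg => by
    rw [Finsupp.notMem_support_iff.mp hg, single_zero]

variable [CommGroup G]

instance : CharP (MonoidAlgebra (ZMod 2) G) 2 := charP_of_injective_algebraMap' (ZMod 2) 2

theorem pow_two_pow_eq_sum (k : ℕ) (x : MonoidAlgebra (ZMod 2) G) :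
    x ^ 2 ^ k = ∑ g, single (g ^ 2 ^ k) (x.coeff g) := by
  conv_lhs => rw [eq_sum_single x]
  simp only [sum_pow_char_pow, single_pow, ZMod.pow_card_pow]

theorem pow_two_pow_eq_single_one {k : ℕ} (hG : ∀ g : G, g ^ 2 ^ k = 1)
    (x : MonoidAlgebra (ZMod 2) G) : x ^ 2 ^ k = single 1 (∑ g, x.coeff g) := by
  simp only [pow_two_pow_eq_sum, hG]
  exact (map_sum (singleAddHom 1) _ _).symm

theorem isUnit_of_sum_coeff_eq_one {k : ℕ} (hG : ∀ g : G, g ^ 2 ^ k = 1)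
    {x : MonoidAlgebra (ZMod 2) G} (hx : ∑ g, x.coeff g = 1) : IsUnit x :=
  .of_pow_eq_one (by rw [pow_two_pow_eq_single_one hG, hx, one_def]) (by positivity)

theorem mul_self_eq_zero_iff {t : G} (ht : ∀ g, g * g = 1 ↔ g = 1 ∨ g = t) (ht1 : t ≠ 1)
    (y : MonoidAlgebra (ZMod 2) G) : y * y = 0 ↔ ∀ g, y.coeff (g * t) = y.coeff g := by
  classical
  have htt : t * t = 1 := (ht t).2 (Or.inr rfl)
  have hfiber : ∀ g₀ : G, univ.filter (fun g => g * g = g₀ * g₀) = {g₀, g₀ * t} := fun g₀ => by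
    ext g
    have := ht (g / g₀)
    rw [div_mul_div_comm, div_eq_one, div_eq_one, div_eq_iff_eq_mul] at this
    simp [this, mul_comm t]
  have hsq : y * y = ∑ g, single (g * g) (y.coeff g) := by
    simpa only [pow_one, sq] using pow_two_pow_eq_sum 1 y
  rw [hsq]
  constructor
  · intro h g₀
    have := congrArg (fun x => x.coeff (g₀ * g₀)) h
    simp only [coeff_sum, Finsupp.finsetSum_apply, coeff_single, Finsupp.single_apply] at this
    rw [Finset.sum_ite, Finset.sum_const_zero, add_zero, hfiber,
      Finset.sum_pair (by simpa using ht1)] at this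
    exact (CharTwo.add_eq_zero.mp this).symm
  · intro h
    -- the terms of `g` and `g * t` cancel
    refine Finset.sum_involution (fun g _ => g * t) (fun g _ => ?_)
      (fun g _ _ => by simpa using ht1)
      (fun g _ => Finset.mem_univ _) (fun g _ => by rw [mul_assoc, htt, mul_one])
    rw [h, mul_mul_mul_comm, htt, mul_one, ← single_add, CharTwo.add_self_eq_zero, single_zero]

end MonoidAlgebra

namespace ZMod

theorem two_mul_eq_zero_iff_dvd_val {n : ℕ} (hn : n ≠ 0) (z : ZMod (2 ^ n)) :
    2 * z = 0 ↔ 2 ^ (n - 1) ∣ z.val := by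
  obtain ⟨m, rfl⟩ : ∃ m, n = m + 1 := ⟨n - 1, by omega⟩
  have hdvd : ∀ v : ℕ, 2 ^ (m + 1) ∣ 2 * v ↔ 2 ^ m ∣ v := fun v => by
    rw [pow_succ', Nat.mul_dvd_mul_iff_left two_pos]
  have hcast : 2 * z = ((2 * z.val : ℕ) : ZMod (2 ^ (m + 1))) := by
    push_cast [natCast_zmod_val]
    rfl
  rw [hcast, natCast_eq_zero_iff, Nat.add_sub_cancel]
  exact hdvd _

theorem two_pow_pred_ne_zero {n : ℕ} (hn : n ≠ 0) : (2 : ZMod (2 ^ n)) ^ (n - 1) ≠ 0 := by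
  intro h
  have h' : ((2 ^ (n - 1) : ℕ) : ZMod (2 ^ n)) = 0 := by push_cast; exact h
  rw [natCast_eq_zero_iff, Nat.pow_dvd_pow_iff_le_right one_lt_two] at h'
  omega

theorem two_mul_eq_zero_iff {n : ℕ} (hn : n ≠ 0) (z : ZMod (2 ^ n)) :
    2 * z = 0 ↔ z = 0 ∨ z = 2 ^ (n - 1) := by
  have hval : ((2 : ZMod (2 ^ n)) ^ (n - 1)).val = 2 ^ (n - 1) := by
    have := val_natCast_of_lt (n := 2 ^ n) (Nat.pow_lt_pow_right one_lt_two (by omega : n - 1 < n))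
    push_cast at this
    exact this
  have hlt : z.val < 2 * 2 ^ (n - 1) := by
    rw [← pow_succ', Nat.sub_add_cancel (Nat.one_le_iff_ne_zero.mpr hn)]; exact z.val_lt
  rw [two_mul_eq_zero_iff_dvd_val hn, ← val_eq_zero, ← (val_injective _).eq_iff, hval]
  constructor
  · rintro ⟨k, hk⟩
    have : k < 2 := by nlinarith
    interval_cases k <;> simp [hk]
  · rintro (h | h) <;> simp [h]

theorem card_two_mul_eq_zero {n : ℕ} (hn : n ≠ 0) :
    Nat.card {z : ZMod (2 ^ n) // 2 * z = 0} = 2 := by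
  classical
  rw [Nat.card_congr (Equiv.subtypeEquivRight fun z => (two_mul_eq_zero_iff hn z).trans
    (by rw [Finset.mem_insert, Finset.mem_singleton] : _ ↔ z ∈ ({0, 2 ^ (n - 1)} : Finset _))),
    Nat.card_eq_fintype_card, Fintype.card_coe, Finset.card_pair (two_pow_pred_ne_zero hn).symm]

theorem card_fun_invariant_mul {n : ℕ} (hn : n ≠ 0) {u : ZMod (2 ^ n)} (hu : u * u = 1)
    (hfix : ∀ z, u * z = z ↔ 2 * z = 0) (F : Type*) [Finite F] :
    Nat.card {c : ZMod (2 ^ n) → F // ∀ z, c (u * z) = c z} = Nat.card F ^ (2 ^ (n - 1) + 1) := by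
  have hσ : Involutive (u * ·) := fun z => by
    show u * (u * z) = z
    rw [← mul_assoc, hu, one_mul]
  rw [hσ.card_invariant_fun, Nat.card_zmod,
    Nat.card_congr (Equiv.subtypeEquivRight (p := (· ∈ fixedPoints (u * ·))) hfix),
    card_two_mul_eq_zero hn]
  obtain ⟨m, rfl⟩ : ∃ m, n = m + 1 := ⟨n - 1, by omega⟩
  rw [pow_succ, Nat.add_sub_cancel]
  congr 1
  omega

end ZMod

theorem cf_mul_eq_self_iff {n : ℕ} (hn : 3 ≤ n) (z : ZMod (2 ^ n)) : cf n * z = z ↔ 2 * z = 0 := by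
  have hnil : IsNilpotent ((2 : ZMod (2 ^ n)) ^ (n - 2)) :=
    ⟨n, by
      rw [← pow_mul]
      exact pow_eq_zero_of_le (Nat.le_mul_of_pos_left n (by omega)) (two_pow_zmod n)⟩
  have hunit : IsUnit ((2 : ZMod (2 ^ n)) ^ (n - 2) - 1) := by
    simpa using hnil.isUnit_one_sub.neg
  have hdiff : cf n * z - z = ((2 : ZMod (2 ^ n)) ^ (n - 2) - 1) * (2 * z) := by
    rw [cf, show n - 1 = n - 2 + 1 by omega, pow_succ]
    ring
  rw [← sub_eq_zero, hdiff, hunit.mul_right_eq_zero]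

theorem card_fun_invariant_cf {n : ℕ} (hn : 3 ≤ n) (F : Type*) [Finite F] :
    Nat.card {c : ZMod (2 ^ n) → F // ∀ z, c (cf n * z) = c z} = Nat.card F ^ (2 ^ (n - 1) + 1) :=
  ZMod.card_fun_invariant_mul (by omega) (cf_sq n (by omega)) (cf_mul_eq_self_iff hn) F

def reduceHalf (n : ℕ) : ZMod (2 ^ n) →+* ZMod (2 ^ (n - 1)) :=
  ZMod.castHom (pow_dvd_pow 2 (Nat.sub_le n 1)) _

theorem reduceHalf_eq_zero_iff {n : ℕ} (hn : n ≠ 0) (w : ZMod (2 ^ n)) :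
    reduceHalf n w = 0 ↔ 2 * w = 0 := by
  conv_lhs => rw [← ZMod.natCast_zmod_val w]
  rw [map_natCast, ZMod.natCast_eq_zero_iff, ZMod.two_mul_eq_zero_iff_dvd_val hn]

theorem reduceHalf_eq_iff {n : ℕ} (hn : n ≠ 0) (x y : ZMod (2 ^ n)) :
    reduceHalf n x = reduceHalf n y ↔ y = x ∨ y = x + 2 ^ (n - 1) := by
  rw [eq_comm, ← sub_eq_zero, ← map_sub, reduceHalf_eq_zero_iff hn, ZMod.two_mul_eq_zero_iff hn,
    sub_eq_zero, sub_eq_iff_eq_add']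

theorem reduceHalf_cf_mul (n : ℕ) (z : ZMod (2 ^ n)) :
    reduceHalf n (cf n * z) = -reduceHalf n z := by
  rw [map_mul, cf, map_sub, map_pow, map_ofNat, map_one, two_pow_zmod, zero_sub, neg_one_mul]

theorem card_fun_invariant_cf_add {n : ℕ} (hn : 3 ≤ n) (F : Type*) [Finite F] :
    Nat.card {c : ZMod (2 ^ n) → F //
      (∀ z, c (cf n * z) = c z) ∧ ∀ z, c (z + 2 ^ (n - 1)) = c z} =
      Nat.card F ^ (2 ^ (n - 2) + 1) := by
  have hπ := ZMod.ringHom_surjective (reduceHalf n)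
  have hfactors : ∀ c : ZMod (2 ^ n) → F,
      (∀ z, c (z + 2 ^ (n - 1)) = c z) ↔ c.FactorsThrough (reduceHalf n) := fun c => by
    refine ⟨fun hc x y hxy => ?_, fun hc z => (hc ?_).symm⟩
    · rcases (reduceHalf_eq_iff (by omega) x y).1 hxy with rfl | rfl
      exacts [rfl, (hc x).symm]
    · rw [reduceHalf_eq_iff (by omega)]
      exact Or.inr rfl
  have hneg : ∀ d : ZMod (2 ^ (n - 1)) → F,
      (∀ z, (d ∘ reduceHalf n) (cf n * z) = (d ∘ reduceHalf n) z) ↔ ∀ w, d (-1 * w) = d w := by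
    intro d
    simp only [comp_apply, reduceHalf_cf_mul, neg_one_mul]
    exact (hπ.forall (p := fun w => d (-w) = d w)).symm
  rw [Nat.card_congr (Equiv.subtypeEquivRight fun c => and_congr_right' (hfactors c)),
    hπ.card_subtype_factorsThrough, Nat.card_congr (Equiv.subtypeEquivRight hneg),
    ZMod.card_fun_invariant_mul (by omega) (by ring) (fun z => by
      rw [neg_one_mul, neg_eq_iff_add_eq_zero, two_mul]), Nat.sub_sub]

section GroupAlgebraOfCyclic

variable {n : ℕ}

theorem aug_apply (x : FC n) : aug n x = ∑ g, x.coeff g := by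
  conv_lhs => rw [MonoidAlgebra.eq_sum_single x]
  simp [aug, MonoidAlgebra.lift_single]

theorem isUnit_of_aug_eq_one {x : FC n} (hx : aug n x = 1) : IsUnit x := by
  have hcard : Nat.card (Cgrp n) = 2 ^ n :=
    (Nat.card_congr Multiplicative.toAdd).trans (Nat.card_zmod _)
  exact MonoidAlgebra.isUnit_of_sum_coeff_eq_one (fun g => hcard ▸ pow_card_eq_one')
    ((aug_apply x).symm.trans hx)

theorem aug_eq_one_of_mul_self_eq_one {x : FC n} (hx : x * x = 1) : aug n x = 1 := by
  rw [← ZMod.pow_card (aug n x), sq, ← map_mul, hx, map_one]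

def coeffFun (n : ℕ) : FC n ≃ (ZMod (2 ^ n) → ZMod 2) :=
  (MonoidAlgebra.coeffEquiv.trans Finsupp.equivFunOnFinite).trans
    (Equiv.arrowCongr Multiplicative.toAdd (Equiv.refl _))

theorem eq_starTwo_iff (hn : 2 ≤ n) (x : FC n) :
    x = starTwo n hn x ↔ ∀ i, coeffFun n x (cf n * i) = coeffFun n x i :=
  MonoidAlgebra.eq_domCongr_iff (theta n hn) x

theorem mul_self_eq_zero_iff (hn : n ≠ 0) (y : FC n) :
    y * y = 0 ↔ ∀ i, coeffFun n y (i + 2 ^ (n - 1)) = coeffFun n y i := by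
  refine MonoidAlgebra.mul_self_eq_zero_iff (t := Multiplicative.ofAdd (2 ^ (n - 1)))
    (fun g => ?_) (fun h => ZMod.two_pow_pred_ne_zero hn (congrArg Multiplicative.toAdd h)) y
  have := ZMod.two_mul_eq_zero_iff hn g.toAdd
  rwa [two_mul] at this

def symmetricUnits (n : ℕ) (hn : 2 ≤ n) : Subgroup (FC n)ˣ :=
  Vgrp n ⊓ MonoidHom.eqLocus (Units.map (starTwo n hn : FC n →* FC n)) (MonoidHom.id _)

theorem mem_symmetricUnits (hn : 2 ≤ n) (u : (FC n)ˣ) :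
    u ∈ symmetricUnits n hn ↔ aug n (u : FC n) = 1 ∧ (u : FC n) = starTwo n hn u := by
  rw [symmetricUnits, Subgroup.mem_inf]
  exact and_congr Iff.rfl (Units.ext_iff.trans eq_comm)

instance : Finite (FC n) := .of_equiv _ (coeffFun n).symm

theorem card_symmetricUnits (hn : 3 ≤ n) :
    Nat.card (symmetricUnits n (Nat.le_of_succ_le hn)) = 2 ^ 2 ^ (n - 1) := by
  have hn2 : 2 ≤ n := by omega
  have hhalf := Nat.card_subtype_eq_two_mul_of_toggle (p := fun x : FC n => x = starTwo n hn2 x)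
    (f := aug n) (Equiv.addRight 1)
    (fun x => by simp only [Equiv.coe_addRight, map_add, map_one, add_left_inj])
    (fun x => by simp only [Equiv.coe_addRight, map_add, map_one])
  calc Nat.card (symmetricUnits n hn2)
      = Nat.card {u : symmetricUnits n hn2 // True} :=
        (Nat.card_congr (Equiv.subtypeUnivEquiv fun _ => trivial)).symm
    _ = Nat.card {x : FC n // (aug n x = 1 ∧ x = starTwo n hn2 x) ∧ True} :=
        Subgroup.card_subtype_eq_of_isUnit (q := fun _ => True) _ (mem_symmetricUnits hn2)
          fun x hx => isUnit_of_aug_eq_one hx.1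
    _ = Nat.card {x : FC n // x = starTwo n hn2 x ∧ aug n x = 1} :=
        Nat.card_congr (Equiv.subtypeEquivRight fun x => by rw [and_true, and_comm])
    _ = Nat.card {x : FC n // x = starTwo n hn2 x} / 2 := by
        rw [hhalf, Nat.mul_div_cancel_left _ two_pos]
    _ = Nat.card {c : ZMod (2 ^ n) → ZMod 2 // ∀ i, c (cf n * i) = c i} / 2 := by
        rw [Nat.card_congr ((coeffFun n).subtypeEquiv (q := fun c => ∀ i, c (cf n * i) = c i)
          (eq_starTwo_iff hn2))]
    _ = 2 ^ 2 ^ (n - 1) := by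
        rw [card_fun_invariant_cf hn, Nat.card_zmod, pow_succ, Nat.mul_div_cancel _ two_pos]

theorem card_symmetricUnits_mul_self_eq_one (hn : 3 ≤ n) :
    Nat.card {x : symmetricUnits n (Nat.le_of_succ_le hn) // x * x = 1} =
      2 ^ (2 ^ (n - 2) + 1) := by
  have hn2 : 2 ≤ n := by omega
  calc Nat.card {x : symmetricUnits n hn2 // x * x = 1}
      = Nat.card {u : symmetricUnits n hn2 //
          ((u : (FC n)ˣ) : FC n) * ((u : (FC n)ˣ) : FC n) = 1} :=
        Nat.card_congr (Equiv.subtypeEquivRight fun x => by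
          rw [Subtype.ext_iff, Units.ext_iff]; rfl)
    _ = Nat.card {x : FC n // (aug n x = 1 ∧ x = starTwo n hn2 x) ∧ x * x = 1} :=
        Subgroup.card_subtype_eq_of_isUnit (q := fun x => x * x = 1) _ (mem_symmetricUnits hn2)
          fun x hx => isUnit_of_aug_eq_one hx.1
    _ = Nat.card {x : FC n // x = starTwo n hn2 x ∧ x * x = 1} :=
        Nat.card_congr (Equiv.subtypeEquivRight fun x =>
          ⟨fun h => ⟨h.1.2, h.2⟩, fun h => ⟨⟨aug_eq_one_of_mul_self_eq_one h.2, h.1⟩, h.2⟩⟩)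
    _ = Nat.card {y : FC n // y = starTwo n hn2 y ∧ y * y = 0} :=
        Nat.card_congr ((Equiv.addRight 1).subtypeEquiv fun x => by
          simp only [Equiv.coe_addRight, map_add, map_one, add_left_inj, CharTwo.add_mul_self,
            CharTwo.add_eq_zero, mul_one])
    _ = Nat.card {c : ZMod (2 ^ n) → ZMod 2 //
          (∀ i, c (cf n * i) = c i) ∧ ∀ i, c (i + 2 ^ (n - 1)) = c i} :=
        Nat.card_congr ((coeffFun n).subtypeEquiv fun y =>
          and_congr (eq_starTwo_iff hn2 y) (mul_self_eq_zero_iff (by omega) y))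
    _ = 2 ^ (2 ^ (n - 2) + 1) := by rw [card_fun_invariant_cf_add hn, Nat.card_zmod]

end GroupAlgebraOfCyclic

/-- For `C` cyclic of order `2^n`, `n ≥ 3`, the group `S_⊛(C)` of `⊛`-symmetric normalized
units has order `2^(2^(n-1))`, and its subgroup of elements of order dividing two has order
`2^(2^(n-2)+1)`. -/
theorem stmt11 (n : ℕ) (hn : 3 ≤ n) :
    ∃ S : Subgroup (FC n)ˣ,
      (∀ u : (FC n)ˣ, u ∈ S ↔
        (aug n (↑u : FC n) = 1 ∧ (↑u : FC n) = starTwo n (by omega) (↑u : FC n))) ∧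
      Nat.card S = 2 ^ (2 ^ (n - 1)) ∧
      Nat.card {x : S // x * x = 1} = 2 ^ (2 ^ (n - 2) + 1) := by
  exact ⟨symmetricUnits n (by omega), mem_symmetricUnits (by omega), card_symmetricUnits hn,
    card_symmetricUnits_mul_self_eq_one hn⟩

end
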